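/- arXiv:1707.08071 — 4 statements merged into one kernel-verified Lean document; each statement's English description precedes it below -/
import Mathlib

section
/- Let k be a positive integer. For every colouring of the rational vector space ℚ^{ℶ_ω} of dimension ℶ_ω with k colours, there exists an infinite set X ⊆ ℚ^{ℶ_ω} such that the sumset X + X = {x + y : x, y ∈ X} is monochromatic (all its elements receive the same colour). -/
/-!
Split `ℶ_ω` coordinates into `k` zones, zone `l` of size `ℶ_{3(k-l)}`. For `j ≤ k`, a vector of
profile `j` has, in each zone `l < j`, weight `½` on two coordinates, and in each zone `l ≥ j`
weight `1` on one coordinate. Applying the Erdős–Rado theorem `(2^μ)⁺ → (ω)²_μ` zone by zone, with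
the choices in the later zones folded into the colour, gives in every zone an infinite sequence of
coordinates along which the colour of a profile-`j` vector depends only on `j`, provided the two
coordinates of each zone are taken in increasing order. By pigeonhole two profiles `a < b` share a
colour. Let `x n` have weights `¼, ¼` on the first two coordinates of each zone `l < a`, `½` on the
`n`-th coordinate of each zone `a ≤ l < b` and `½` on the first coordinate of each zone `l ≥ b`:
then `x n + x n` has profile `a` and `x n + x m`, `n < m`, has profile `b`.
-/

open Cardinal Pointwise Function Finsupp

universe u

theorem Set.Infinite.exists_strictMono_seq {α : Type*} [LinearOrder α] [WellFoundedLT α]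
    {s : Set α} (hs : s.Infinite) : ∃ g : ℕ → α, StrictMono g ∧ ∀ n, g n ∈ s := by
  let f : ℕ → α := fun n => hs.natEmbedding s n
  obtain ⟨g, hg⟩ := wellQuasiOrdered_le.exists_monotone_subseq f
  have hf : Injective f := Subtype.val_injective.comp (hs.natEmbedding s).injective
  exact ⟨f ∘ g, Monotone.strictMono_of_injective (fun m n => hg m n) (hf.comp g.injective),
    fun n => (hs.natEmbedding s _).2⟩

namespace ErdosRado

variable {S C T : Type u} [Nonempty S] [LinearOrder T] [WellFoundedLT T] (F : S → S → C)

def Candidates (b : S) (i : T) (tr : ∀ j, j < i → S) : Set S :=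
  {x | ∀ j (hj : j < i), x ≠ tr j hj ∧ F (tr j hj) x = F (tr j hj) b}

/-- The branch of the Erdős–Rado tree towards `b`: each point of the trace is seen by all earlier
ones in the colour in which they see `b`. As long as `b` itself is a candidate, `epsilon` picks a
genuine candidate; afterwards its value is junk. -/
noncomputable def trace (b : S) : T → S :=
  wellFounded_lt.fix fun i tr => Classical.epsilon (· ∈ Candidates F b i tr)

theorem trace_eq (b : S) (i : T) :
    trace F b i = Classical.epsilon (· ∈ Candidates F b i fun j _ => trace F b j) :=
  wellFounded_lt.fix_eq _ i

theorem trace_spec {b : S} {i : T} (hb : ∀ j < i, trace F b j ≠ b) :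
    ∀ j < i, trace F b i ≠ trace F b j ∧
      F (trace F b j) (trace F b i) = F (trace F b j) b := by
  have hbc : b ∈ Candidates F b i fun j _ => trace F b j := fun j hj => ⟨(hb j hj).symm, rfl⟩
  rw [trace_eq]
  exact Classical.epsilon_spec ⟨b, hbc⟩

theorem trace_congr {b b' : S} {i : T} (h : ∀ j < i, F (trace F b j) b = F (trace F b' j) b') :
    ∀ j ≤ i, trace F b j = trace F b' j := by
  intro j
  induction j using WellFoundedLT.induction with
  | ind j ih =>
    intro hj
    rw [trace_eq, trace_eq]
    congr 2
    ext x
    refine forall₂_congr fun j' hj' => ?_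
    dsimp only
    rw [h j' (hj'.trans_le hj), ih j' hj' (hj'.le.trans hj)]

theorem exists_homogeneous_of_trace_ne [Infinite T] {b : S} (hb : ∀ i : T, trace F b i ≠ b)
    (hCT : #C < #T) : ∃ h : ℕ → S, Injective h ∧ ∃ c, ∀ n m, n < m → F (h n) (h m) = c := by
  obtain ⟨c, hc⟩ := exists_infinite_fiber (fun i : T => F (trace F b i) b) hCT
  obtain ⟨g, hg, hgc⟩ := (Set.infinite_coe_iff.mp hc).exists_strictMono_seq
  have hspec (i : T) := trace_spec F (i := i) fun j _ => hb j
  refine ⟨trace F b ∘ g, fun n m hnm => hg.injective ?_, c, fun n m hnm => ?_⟩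
  · by_contra hne
    rcases lt_or_gt_of_ne hne with hlt | hlt
    exacts [(hspec _ _ hlt).1 hnm.symm, (hspec _ _ hlt).1 hnm]
  · exact (hspec _ _ (hg hnm)).2.trans (hgc n)

theorem mk_le_sum_of_trace_returns (hret : ∀ b, ∃ i : T, trace F b i = b) :
    #S ≤ sum fun i : T => #(Set.Iio i → C) := by
  choose ret hret using hret
  have hinj (i : T) :
      Injective fun b : ret ⁻¹' {i} => fun j : Set.Iio i => F (trace F b (j : T)) b := by
    rintro ⟨b, rfl⟩ ⟨b', hb'⟩ hbb'
    refine Subtype.ext ?_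
    calc b = trace F b (ret b) := (hret b).symm
      _ = trace F b' (ret b) := trace_congr F (fun j hj => congrFun hbb' ⟨j, hj⟩) _ le_rfl
      _ = b' := hb' ▸ hret b'
  calc #S = #(Σ i, ret ⁻¹' {i}) := (mk_congr (Equiv.sigmaFiberEquiv ret)).symm
    _ = sum fun i => #(ret ⁻¹' {i}) := mk_sigma _
    _ ≤ sum fun i : T => #(Set.Iio i → C) := sum_le_sum _ _ fun i => mk_le_of_injective (hinj i)

end ErdosRado

theorem sum_mk_Iio_arrow_le {C : Type u} {μ : Cardinal.{u}} (hμ : ℵ₀ ≤ μ) (hC : #C ≤ μ) :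
    (sum fun i : (Order.succ μ).ord.ToType => #(Set.Iio i → C)) ≤ 2 ^ μ := by
  have h2μ : ℵ₀ ≤ 2 ^ μ := hμ.trans (cantor μ).le
  have hterm (i : (Order.succ μ).ord.ToType) : #(Set.Iio i → C) ≤ 2 ^ μ := by
    have hi : #(Set.Iio i) ≤ μ := Order.lt_succ_iff.mp (by simpa using mk_Iio_lt i)
    calc #(Set.Iio i → C) = #C ^ #(Set.Iio i) := (power_def _ _).symm
      _ ≤ μ ^ #(Set.Iio i) := power_le_power_right hC
      _ ≤ μ ^ μ := power_le_power_left (aleph0_pos.trans_le hμ).ne' hi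
      _ = 2 ^ μ := power_self_eq hμ
  calc (sum fun i : (Order.succ μ).ord.ToType => #(Set.Iio i → C))
      ≤ sum fun _ : (Order.succ μ).ord.ToType => (2 : Cardinal) ^ μ := sum_le_sum _ _ hterm
    _ = Order.succ μ * 2 ^ μ := by rw [sum_const', mk_toType, card_ord]
    _ ≤ 2 ^ μ * 2 ^ μ := by gcongr; exact Order.succ_le_of_lt (cantor μ)
    _ = 2 ^ μ := mul_eq_self h2μ

open ErdosRado in
theorem exists_homogeneous_seq_of_two_power_lt {S C : Type u} (F : S → S → C)
    (hS : 2 ^ max #C ℵ₀ < #S) :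
    ∃ h : ℕ → S, Injective h ∧ ∃ c, ∀ n m, n < m → F (h n) (h m) = c := by
  set μ := max #C ℵ₀
  have hμ : ℵ₀ ≤ μ := le_max_right _ _
  have : Nonempty S := mk_ne_zero_iff.mp (pos_of_gt hS).ne'
  let T := (Order.succ μ).ord.ToType
  have hT : #T = Order.succ μ := by rw [mk_toType, card_ord]
  -- Either some trace runs for `μ⁺` steps, or every `b` is recovered from the colours in which
  -- its (short) trace sees it.
  by_cases hlong : ∃ b, ∀ i : T, trace F b i ≠ b
  · obtain ⟨b, hb⟩ := hlong
    have : Infinite T := infinite_iff.mpr (hT ▸ hμ.trans (Order.le_succ μ))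
    exact exists_homogeneous_of_trace_ne F hb (hT ▸ Order.lt_succ_iff.mpr (le_max_left _ _))
  · push Not at hlong
    have hSμ := (mk_le_sum_of_trace_returns F hlong).trans
      (sum_mk_Iio_arrow_le hμ (le_max_left _ _))
    exact absurd hS hSμ.not_gt

theorem mk_pi_le_of_forall_le {m : ℕ} {W : Fin m → Type u} {B : Cardinal.{u}}
    (hB : ℵ₀ ≤ B) (hW : ∀ l, #(W l) ≤ B) : #(∀ l, W l) ≤ B :=
  calc #(∀ l, W l) = prod fun l => #(W l) := mk_pi _
    _ ≤ prod fun _ : Fin m => B := prod_le_prod _ _ hW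
    _ = B ^ m := by simp
    _ ≤ B := power_nat_le hB

theorem mk_arrow_le_two_power {X P : Type u} [Countable P] {B : Cardinal.{u}} (hB : ℵ₀ ≤ B)
    (hX : #X ≤ B) : #(X → P) ≤ 2 ^ B :=
  calc #(X → P) = #P ^ #X := (power_def _ _).symm
    _ ≤ B ^ B := (power_le_power_right (mk_le_aleph0.trans hB)).trans
        (power_le_power_left (aleph0_pos.trans_le hB).ne' hX)
    _ = 2 ^ B := power_self_eq hB

theorem beth_natCast_succ (n : ℕ) : ℶ_ ↑(n + 1) = 2 ^ ℶ_ ↑n := by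
  rw [Nat.cast_succ, beth_add_one]

/-- Three beth steps per zone: the colours used on the first zone are functions on the choices in
the later zones, at most `2 ^ ℶ_{3(m-1)}` many, so Erdős–Rado needs more than
`2 ^ 2 ^ ℶ_{3(m-1)}` points there. -/
theorem exists_homogeneous_pairs_of_mk_eq_beth {P : Type u} [Countable P] (m : ℕ)
    (W : Fin m → Type u) (hW : ∀ l, #(W l) = ℶ_ ↑(3 * (m - l)))
    (G : (∀ l, W l × W l) → P) :
    ∃ h : ∀ l, ℕ → W l, (∀ l, Injective (h l)) ∧ ∃ p, ∀ s t : Fin m → ℕ, (∀ l, s l < t l) →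
      G (fun l => (h l (s l), h l (t l))) = p := by
  induction m with
  | zero =>
    exact ⟨finZeroElim, finZeroElim, G finZeroElim, fun _ _ _ => congrArg G (funext finZeroElim)⟩
  | succ m ih =>
    let C := (∀ l : Fin m, W l.succ × W l.succ) → P
    have hC : max #C ℵ₀ ≤ ℶ_ ↑(3 * m + 1) := by
      have hB : ℵ₀ ≤ (ℶ_ ↑(3 * m) : Cardinal.{u}) := aleph0_le_beth _
      have htail : #(∀ l : Fin m, W l.succ × W l.succ) ≤ ℶ_ ↑(3 * m) := by
        refine mk_pi_le_of_forall_le (W := fun l => W l.succ × W l.succ) hB fun l => ?_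
        rw [mk_prod, lift_id, hW, Fin.val_succ]
        have : ℶ_ ↑(3 * (m + 1 - (l + 1))) ≤ ℶ_ ↑(3 * m) := beth_mono (by norm_cast; omega)
        exact mul_le_of_le hB this this
      rw [beth_natCast_succ]
      exact max_le (mk_arrow_le_two_power hB htail) (hB.trans (cantor _).le)
    obtain ⟨h₀, h₀_inj, g, hg⟩ := exists_homogeneous_seq_of_two_power_lt
      (fun x y : W 0 => (fun rest => G (Fin.cons (x, y) rest) : C)) <| by
        calc 2 ^ max #C ℵ₀ ≤ ℶ_ ↑(3 * m + 2) := by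
              rw [beth_natCast_succ]; exact power_le_power_left two_ne_zero hC
          _ < #(W 0) := by rw [hW, Fin.val_zero]; exact beth_lt_beth.mpr (by norm_cast; omega)
    obtain ⟨h', h'_inj, p, hp⟩ := ih (fun l => W l.succ)
      (fun l => by rw [hW, Fin.val_succ]; congr 3; omega) g
    refine ⟨Fin.cons h₀ h', Fin.cases h₀_inj h'_inj, p, fun s t hst => ?_⟩
    rw [← hp (Fin.tail s) (Fin.tail t) (fun l => hst l.succ), ← hg _ _ (hst 0)]
    congr 1
    refine funext (Fin.cases ?_ fun l => ?_) <;> rfl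

section Sumset

variable {ι : Type*} {k : ℕ}

noncomputable def profile (j : ℕ) (p q : Fin k → ι) : ι →₀ ℚ :=
  ∑ l : Fin k, if (l : ℕ) < j then single (p l) 2⁻¹ + single (q l) 2⁻¹ else single (p l) 1

noncomputable def sumsetSeq (E : Fin k → ℕ → ι) (a b n : ℕ) : ι →₀ ℚ :=
  ∑ l : Fin k, if (l : ℕ) < a then single (E l 0) 4⁻¹ + single (E l 1) 4⁻¹
    else if (l : ℕ) < b then single (E l n) 2⁻¹ else single (E l 0) 2⁻¹

def zoneIndex (a b n d : ℕ) (l : Fin k) : ℕ := if a ≤ l ∧ (l : ℕ) < b then n else d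

theorem single_half_add_self (x : ι) : single x (2⁻¹ : ℚ) + single x 2⁻¹ = single x 1 := by
  rw [← single_add]; norm_num

theorem single_quarter_add_add_self (x y : ι) :
    single x (4⁻¹ : ℚ) + single y 4⁻¹ + (single x 4⁻¹ + single y 4⁻¹) =
      single x 2⁻¹ + single y 2⁻¹ := by
  rw [add_add_add_comm, ← single_add, ← single_add]; norm_num

variable (E : Fin k → ℕ → ι) {a b : ℕ}

theorem sumsetSeq_add_self (n : ℕ) :
    sumsetSeq E a b n + sumsetSeq E a b n =
      profile a (fun l => E l (zoneIndex a b n 0 l))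
        (fun l => E l (zoneIndex a b (n + 1) 1 l)) := by
  simp only [sumsetSeq, profile, zoneIndex, ← Finset.sum_add_distrib]
  refine Finset.sum_congr rfl fun l _ => ?_
  split_ifs <;> first | omega | simp only [single_half_add_self, single_quarter_add_add_self]

theorem sumsetSeq_add (hab : a < b) (n m : ℕ) :
    sumsetSeq E a b n + sumsetSeq E a b m =
      profile b (fun l => E l (zoneIndex a b n 0 l)) (fun l => E l (zoneIndex a b m 1 l)) := by
  simp only [sumsetSeq, profile, zoneIndex, ← Finset.sum_add_distrib]
  refine Finset.sum_congr rfl fun l _ => ?_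
  split_ifs <;> first | omega | simp only [single_half_add_self, single_quarter_add_add_self]

theorem sumsetSeq_apply_of_lt (hE : Injective (uncurry E)) (hab : a < b) (hak : a < k)
    (n m : ℕ) : sumsetSeq E a b m (E ⟨a, hak⟩ n) = if m = n then 2⁻¹ else 0 := by
  classical
  have hE' : ∀ l t l' t', E l t = E l' t' ↔ l = l' ∧ t = t' := fun l t l' t' =>
    ⟨fun h => Prod.ext_iff.mp (@hE (l, t) (l', t') h), by rintro ⟨rfl, rfl⟩; rfl⟩
  rw [sumsetSeq, finsetSum_apply, Finset.sum_eq_single ⟨a, hak⟩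
    (fun l _ hl => by split_ifs <;> simp [hE', hl]) (by simp)]
  simp [hab, single_apply, hE', eq_comm]

theorem sumsetSeq_injective (hE : Injective (uncurry E)) (hab : a < b) (hak : a < k) :
    Injective (sumsetSeq E a b) := by
  intro n m h
  have := congrArg (· (E ⟨a, hak⟩ n)) h
  simp only [sumsetSeq_apply_of_lt E hE hab hak] at this
  by_contra hnm
  rw [if_neg (Ne.symm hnm)] at this
  norm_num at this

theorem exists_infinite_sumset_eq_of_profiles {P : Type*} (c : (ι →₀ ℚ) → P)
    (hE : Injective (uncurry E)) (hab : a < b) (hak : a < k) {i : P}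
    (ha : ∀ s t : Fin k → ℕ, (∀ l, s l < t l) →
      c (profile a (fun l => E l (s l)) (fun l => E l (t l))) = i)
    (hb : ∀ s t : Fin k → ℕ, (∀ l, s l < t l) →
      c (profile b (fun l => E l (s l)) (fun l => E l (t l))) = i) :
    ∃ X : Set (ι →₀ ℚ), X.Infinite ∧ ∀ z ∈ X + X, c z = i := by
  refine ⟨Set.range (sumsetSeq E a b), Set.infinite_range_of_injective
    (sumsetSeq_injective E hE hab hak), ?_⟩
  have hb' {n m : ℕ} (hnm : n < m) : c (sumsetSeq E a b n + sumsetSeq E a b m) = i := by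
    rw [sumsetSeq_add E hab]
    exact hb _ _ fun l => by unfold zoneIndex; split_ifs <;> omega
  rintro _ ⟨_, ⟨n, rfl⟩, _, ⟨m, rfl⟩, rfl⟩
  beta_reduce
  rcases lt_trichotomy n m with hnm | rfl | hnm
  · exact hb' hnm
  · rw [sumsetSeq_add_self]
    exact ha _ _ fun l => by unfold zoneIndex; split_ifs <;> omega
  · exact add_comm (sumsetSeq E a b m) _ ▸ hb' hnm

end Sumset

theorem exists_embedding_homogeneous_profiles {ι P : Type u} [Countable P] (k : ℕ)
    (hι : ℶ_ ↑(3 * k) ≤ #ι) (c : (ι →₀ ℚ) → P) :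
    ∃ E : Fin k → ℕ → ι, Injective (uncurry E) ∧ ∃ φ : Fin (k + 1) → P,
      ∀ j : Fin (k + 1), ∀ s t : Fin k → ℕ, (∀ l, s l < t l) →
        c (profile j (fun l => E l (s l)) (fun l => E l (t l))) = φ j := by
  let W (l : Fin k) : Type u := (ℶ_ ↑(3 * (k - l))).out
  have hW (l : Fin k) : #(W l) = ℶ_ ↑(3 * (k - l)) := mk_out _
  have hB : ℵ₀ ≤ (ℶ_ ↑(3 * k) : Cardinal.{u}) := aleph0_le_beth _
  obtain ⟨e⟩ : Nonempty ((Σ l, W l) ↪ ι) := by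
    refine (le_def _ _).mp (le_trans ?_ hι)
    calc #(Σ l, W l) = sum fun l => #(W l) := mk_sigma _
      _ ≤ sum fun _ : Fin k => ℶ_ ↑(3 * k) := sum_le_sum _ _ fun l =>
          hW l ▸ beth_mono (by norm_cast; omega)
      _ = k * ℶ_ ↑(3 * k) := by simp
      _ ≤ ℶ_ ↑(3 * k) := mul_le_of_le hB (natCast_lt_aleph0.le.trans hB) le_rfl
  obtain ⟨h, h_inj, φ, hφ⟩ := exists_homogeneous_pairs_of_mk_eq_beth k W hW
    fun ch (j : Fin (k + 1)) =>
      c (profile j (fun l => e ⟨l, (ch l).1⟩) (fun l => e ⟨l, (ch l).2⟩))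
  refine ⟨fun l t => e ⟨l, h l t⟩, fun ⟨l, t⟩ ⟨l', t'⟩ hE => ?_, φ,
    fun j s t hst => congrFun (hφ s t hst) j⟩
  obtain ⟨rfl, hlt⟩ := Sigma.mk.inj_iff.mp (e.injective hE)
  exact Prod.ext rfl (h_inj l (eq_of_heq hlt))

theorem sumset_monochromatic_of_beth_omega_dim_general (k : ℕ)
    (ι : Type) (hι : #ι = Cardinal.beth Ordinal.omega0)
    (c : (ι →₀ ℚ) → Fin k) :
    ∃ X : Set (ι →₀ ℚ), X.Infinite ∧ ∃ i : Fin k, ∀ z ∈ X + X, c z = i := by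
  obtain ⟨E, hE, φ, hφ⟩ := exists_embedding_homogeneous_profiles k
    (hι ▸ beth_le_beth.mpr (Ordinal.natCast_lt_omega0 _).le) c
  obtain ⟨a, b, hne, hφab⟩ := Fintype.exists_ne_map_eq_of_card_lt φ (by simp)
  wlog hab : a < b generalizing a b
  · exact this b a hne.symm hφab.symm (hne.lt_or_gt.resolve_left hab)
  obtain ⟨X, hX, hXc⟩ := exists_infinite_sumset_eq_of_profiles E c hE hab
    (by have := b.isLt; omega) (hφ a) (hφab ▸ hφ b)
  exact ⟨X, hX, φ a, hXc⟩

/-- **Theorem 2 (Main Result).** Let `k` be a positive integer. For every colouring of the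
rational vector space of dimension `ℶ_ω` (here realised as the finitely supported functions
`ι →₀ ℚ` for any index type `ι` of cardinality `ℶ_ω`) with `k` colours, there is an infinite
set `X` such that the sumset `X + X` is monochromatic. -/
theorem sumset_monochromatic_of_beth_omega_dim (k : ℕ) (hk : 0 < k)
    (ι : Type) (hι : #ι = Cardinal.beth Ordinal.omega0)
    (c : (ι →₀ ℚ) → Fin k) :
    ∃ X : Set (ι →₀ ℚ), X.Infinite ∧ ∃ i : Fin k, ∀ z ∈ X + X, c z = i :=
  sumset_monochromatic_of_beth_omega_dim_general k ι hι c
end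

section
/- Let r be a non-negative integer and let κ be an infinite cardinal. Suppose the (r+1)-element subsets of a set of cardinality (exp_r(κ))⁺ (the cardinal successor of the r-fold exponential of κ) are coloured with κ colours. Then there is a subset of cardinality κ⁺ all of whose (r+1)-element subsets receive the same colour. -/
/-!
Induction on `r`; for `r = 0` this is the pigeonhole principle for the regular cardinal `κ⁺`.
For the step let `μ = exp_{r-1} κ`, so `#α = (2 ^ μ)⁺`. The colour type of a point `a` over
`X ⊆ α` is `s ↦ c (insert a s)` on finite `s ⊆ X`; over a set of size `μ` there are at most
`2 ^ μ` types. Closing under realizations along a chain of length `μ⁺` gives a set `D` of size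
`2 ^ μ` in which every type over a `μ`-small subset of `D` that is realized outside the subset
is realized. Pick `a ∉ D` and choose in `D`, by transfinite recursion of length `μ⁺`, points
`x ξ` with the type of `a` over the earlier points. Then on the points `x ξ` the colour of
a finite set only depends on the set minus its last point, so the induction hypothesis for the
`μ⁺` indices, coloured by `t ↦ c (insert a (x '' t))`, gives the homogeneous set.
-/

open Cardinal

/-- The `n`-fold iterated exponential of a cardinal: `exp_0 κ = κ`, `exp_{n+1} κ = 2 ^ exp_n κ`. -/
def iterExp (κ : Cardinal) : ℕ → Cardinal
  | 0 => κ
  | n + 1 => 2 ^ iterExp κ n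

universe u

open Set Function Order

theorem le_iterExp (κ : Cardinal) (r : ℕ) : κ ≤ iterExp κ r := by
  induction r with
  | zero => exact le_rfl
  | succ n ih => exact ih.trans (cantor _).le

theorem aleph0_le_iterExp {κ : Cardinal} (hκ : ℵ₀ ≤ κ) (r : ℕ) : ℵ₀ ≤ iterExp κ r :=
  hκ.trans (le_iterExp κ r)

section CardinalBounds

variable {μ : Cardinal.{u}}

theorem Cardinal.mk_iUnion_le_of_le {α ι : Type u} {f : ι → Set α} (hμ : ℵ₀ ≤ μ)
    (hι : #ι ≤ μ) (hf : ∀ i, #(f i) ≤ μ) : #(⋃ i, f i) ≤ μ :=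
  (mk_iUnion_le f).trans <| (mul_le_mul' hι (ciSup_le' hf)).trans_eq (mul_eq_self hμ)

theorem Cardinal.mk_finset_le_of_le {α : Type u} (hμ : ℵ₀ ≤ μ) (hα : #α ≤ μ) :
    #(Finset α) ≤ μ := by
  cases finite_or_infinite α
  · exact (lt_aleph0_of_finite _).le.trans hμ
  · rwa [mk_finset_of_infinite]

theorem Cardinal.two_power_power_self (hμ : ℵ₀ ≤ μ) : ((2 : Cardinal) ^ μ) ^ μ = 2 ^ μ := by
  rw [← power_mul, mul_eq_self hμ]

theorem Cardinal.mk_Iio_toType_ord_succ_le (i : (succ μ).ord.ToType) : #(Iio i) ≤ μ :=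
  lt_succ_iff.mp <| by simpa using mk_Iio_lt i (by simp)

theorem Cardinal.exists_forall_lt_of_mk_le {S : Set (succ μ).ord.ToType} (hμ : ℵ₀ ≤ μ)
    (hS : #S ≤ μ) : ∃ ζ, ∀ w ∈ S, w < ζ := by
  by_contra! hcof
  have h := Order.cof_le (s := S) hcof
  rw [Ordinal.cof_toType, (isRegular_succ hμ).cof_ord] at h
  exact (lt_succ μ).not_ge (h.trans hS)

theorem Cardinal.mk_finset_subset_fun_le {α β : Type u} (hμ : ℵ₀ ≤ μ) (hβ : #β ≤ μ)
    {X : Set α} (hX : #X ≤ μ) : #({s : Finset α // ↑s ⊆ X} → β) ≤ 2 ^ μ := calc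
  #({s : Finset α // ↑s ⊆ X} → β) = #β ^ #(Finset X) := by
    rw [← power_def, mk_congr (Equiv.finsetSubtypeComm (· ∈ X))]; rfl
  _ ≤ μ ^ #(Finset X) := power_le_power_right hβ
  _ ≤ μ ^ μ := power_le_power_left (aleph0_pos.trans_le hμ).ne' (mk_finset_le_of_le hμ hX)
  _ = 2 ^ μ := power_self_eq hμ

end CardinalBounds

noncomputable def prefixRec {ι γ : Type*} [Preorder ι] [WellFoundedLT ι] (F : Set γ → γ) : ι → γ :=
  WellFoundedLT.fix fun i x => F (range fun j : Iio i => x j j.2)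

theorem prefixRec_eq {ι γ : Type*} [Preorder ι] [WellFoundedLT ι] (F : Set γ → γ) (i : ι) :
    prefixRec F i = F (prefixRec F '' Iio i) := by
  rw [prefixRec, WellFoundedLT.fix_eq, image_eq_range]

section ColorTypes

variable {α β : Type u} [DecidableEq α] (c : Finset α → β) {μ : Cardinal.{u}}

def colorType (X : Set α) (a : α) : {s : Finset α // ↑s ⊆ X} → β :=
  fun s => c (insert a s)

/-- One realizer outside `X` of each colour type over `X` realized outside `X`. -/
def typeRealizers (X : Set α) : Set α :=
  range (Subtype.val ∘ rangeSplitting fun b : ↥Xᶜ => colorType c X b)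

theorem exists_mem_typeRealizers {X : Set α} {a : α} (ha : a ∉ X) :
    ∃ b ∈ typeRealizers c X, b ∉ X ∧ colorType c X b = colorType c X a := by
  let τ : range fun b : ↥Xᶜ => colorType c X b := ⟨_, ⟨a, ha⟩, rfl⟩
  exact ⟨_, mem_range_self τ, (rangeSplitting _ τ).2, apply_rangeSplitting _ τ⟩

theorem mk_typeRealizers_le (hμ : ℵ₀ ≤ μ) (hβ : #β ≤ μ) {X : Set α}
    (hX : #X ≤ μ) : #(typeRealizers c X) ≤ 2 ^ μ :=
  mk_range_le.trans <| (mk_set_le _).trans (mk_finset_subset_fun_le hμ hβ hX)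

def typeClosureStep (μ : Cardinal.{u}) (E : Set α) : Set α :=
  E ∪ ⋃ X : {X : Set α // X ⊆ E ∧ #X ≤ μ}, typeRealizers c X

theorem mk_typeClosureStep_le (hμ : ℵ₀ ≤ μ) (hβ : #β ≤ μ) {E : Set α}
    (hE : #E ≤ 2 ^ μ) : #(typeClosureStep c μ E) ≤ 2 ^ μ := by
  have h2μ : ℵ₀ ≤ (2 : Cardinal) ^ μ := hμ.trans (cantor μ).le
  have hsmall : #{X : Set α // X ⊆ E ∧ #X ≤ μ} ≤ 2 ^ μ := calc
    _ ≤ max #E ℵ₀ ^ μ := mk_bounded_subset_le E μ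
    _ ≤ (2 ^ μ) ^ μ := power_le_power_right (max_le hE h2μ)
    _ = 2 ^ μ := two_power_power_self hμ
  refine (mk_union_le _ _).trans ((add_le_add hE ?_).trans_eq (add_eq_self h2μ))
  exact mk_iUnion_le_of_le h2μ hsmall fun X => mk_typeRealizers_le c hμ hβ X.2.2

theorem exists_mem_typeClosureStep {E X : Set α} (hXE : X ⊆ E) (hX : #X ≤ μ)
    {a : α} (ha : a ∉ X) :
    ∃ b ∈ typeClosureStep c μ E, b ∉ X ∧ colorType c X b = colorType c X a :=
  have ⟨b, hb, hbX, hba⟩ := exists_mem_typeRealizers c ha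
  ⟨b, mem_union_right _ (mem_iUnion_of_mem ⟨X, hXE, hX⟩ hb), hbX, hba⟩

end ColorTypes

section Closure

variable {α β : Type u} [DecidableEq α] (c : Finset α → β) (μ : Cardinal.{u})

def IsTypeClosed (D : Set α) : Prop :=
  ∀ X ⊆ D, #X ≤ μ → ∀ a ∉ X, ∃ b ∈ D, b ∉ X ∧ colorType c X b = colorType c X a

variable {μ}

theorem exists_isTypeClosed (hμ : ℵ₀ ≤ μ) (hβ : #β ≤ μ) :
    ∃ D : Set α, #D ≤ 2 ^ μ ∧ IsTypeClosed c μ D := by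
  let E : (succ μ).ord.ToType → Set α := prefixRec fun S => typeClosureStep c μ (⋃₀ S)
  have hE : ∀ ξ, E ξ = typeClosureStep c μ (⋃ η ∈ Iio ξ, E η) := fun ξ => by
    rw [← sUnion_image]
    exact prefixRec_eq _ ξ
  have h2μ : ℵ₀ ≤ (2 : Cardinal) ^ μ := hμ.trans (cantor μ).le
  have hEcard : ∀ ξ, #(E ξ) ≤ 2 ^ μ := fun ξ => by
    induction ξ using WellFoundedLT.induction with
    | ind ξ ih =>
      rw [hE, biUnion_eq_iUnion]
      exact mk_typeClosureStep_le c hμ hβ <| mk_iUnion_le_of_le h2μ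
        ((mk_Iio_toType_ord_succ_le ξ).trans (cantor μ).le) fun η => ih η η.2
  refine ⟨⋃ ξ, E ξ, mk_iUnion_le_of_le h2μ ?_ hEcard, ?_⟩
  · rw [mk_ord_toType]
    exact succ_le_of_lt (cantor μ)
  · intro X hXD hX a ha
    choose f hf using fun x : X => mem_iUnion.mp (hXD x.2)
    -- `μ⁺` is regular, so the `μ` stages at which the points of `X` appear are bounded.
    obtain ⟨ζ, hζ⟩ := exists_forall_lt_of_mk_le hμ (mk_range_le.trans hX : #(range f) ≤ μ)
    have hXζ : X ⊆ ⋃ η ∈ Iio ζ, E η := fun x hx =>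
      mem_biUnion (hζ _ (mem_range_self ⟨x, hx⟩)) (hf ⟨x, hx⟩)
    obtain ⟨b, hb, hbX, hba⟩ := exists_mem_typeClosureStep c hXζ hX ha
    exact ⟨b, mem_iUnion_of_mem ζ (hE ζ ▸ hb), hbX, hba⟩

theorem IsTypeClosed.exists_injective_colorType_eq {D : Set α} (hD : IsTypeClosed c μ D)
    {a : α} (ha : a ∉ D) {ι : Type u} [LinearOrder ι] [WellFoundedLT ι]
    (hι : ∀ i : ι, #(Iio i) ≤ μ) :
    ∃ x : ι → α, Injective x ∧
      ∀ i, colorType c (x '' Iio i) (x i) = colorType c (x '' Iio i) a := by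
  classical
  let F : Set α → α := fun Y =>
    if h : Y ⊆ D ∧ #Y ≤ μ then (hD Y h.1 h.2 a fun haY => ha (h.1 haY)).choose else a
  have hF : ∀ Y ⊆ D, #Y ≤ μ → F Y ∈ D ∧ F Y ∉ Y ∧ colorType c Y (F Y) = colorType c Y a := by
    intro Y hYD hY
    simp only [F, dif_pos (And.intro hYD hY)]
    exact (hD Y hYD hY a fun haY => ha (hYD haY)).choose_spec
  let x : ι → α := prefixRec F
  have hx : ∀ i, x i ∈ D ∧ x i ∉ x '' Iio i ∧
      colorType c (x '' Iio i) (x i) = colorType c (x '' Iio i) a := fun i => by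
    induction i using WellFoundedLT.induction with
    | ind i ih =>
      rw [show x i = F (x '' Iio i) from prefixRec_eq F i]
      exact hF _ (image_subset_iff.2 fun j hj => (ih j hj).1) (mk_image_le.trans (hι i))
  exact ⟨x, .of_lt_imp_ne fun i j hij hx' => (hx j).2.1 ⟨i, hij, hx'⟩, fun i => (hx i).2.2⟩

end Closure

theorem homogeneous_image_of_colorType_eq {α β : Type u} {ι : Type*} [DecidableEq α]
    [LinearOrder ι] (c : Finset α → β) {x : ι → α} (hx : Injective x) {a : α}
    (hxa : ∀ i, colorType c (x '' Iio i) (x i) = colorType c (x '' Iio i) a)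
    {H : Set ι} {n : ℕ} {k : β}
    (hH : ∀ t : Finset ι, ↑t ⊆ H → t.card = n → c (insert a (t.image x)) = k) :
    ∀ s : Finset α, ↑s ⊆ x '' H → s.card = n + 1 → c s = k := by
  intro s hsH hs
  obtain ⟨t, htH, rfl⟩ := Finset.subset_set_image_iff.mp hsH
  rw [Finset.card_image_of_injective t hx] at hs
  have ht : t.Nonempty := Finset.card_pos.mp (hs ▸ n.succ_pos)
  set i := t.max' ht
  have hti : t.image x = insert (x i) ((t.erase i).image x) := by
    rw [← Finset.image_insert, Finset.insert_erase (t.max'_mem ht)]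
  have hlt : ↑((t.erase i).image x) ⊆ x '' Iio i := by
    rw [Finset.coe_image]
    exact image_mono fun j hj => t.lt_max'_of_mem_erase_max' ht hj
  calc c (t.image x) = c (insert (x i) ((t.erase i).image x)) := by rw [hti]
    _ = c (insert a ((t.erase i).image x)) := congrFun (hxa i) ⟨_, hlt⟩
    _ = k := hH _ (fun j hj => htH (Finset.mem_of_mem_erase hj))
      (by rw [Finset.card_erase_of_mem (t.max'_mem ht), hs]; rfl)

theorem exists_homogeneous_singletons {κ : Cardinal.{u}} (hκ : ℵ₀ ≤ κ) {α β : Type u}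
    (hα : #α = succ κ) (hβ : #β ≤ κ) (c : Finset α → β) :
    ∃ H : Set α, #H = succ κ ∧ ∃ i : β, ∀ s : Finset α, ↑s ⊆ H → s.card = 1 → c s = i := by
  obtain ⟨i, hi⟩ := infinite_pigeonhole_card (fun a => c {a}) (succ κ) hα.ge
    (hκ.trans (le_succ κ)) (by rw [(isRegular_succ hκ).cof_ord]; exact hβ.trans_lt (lt_succ κ))
  refine ⟨_, le_antisymm (hα ▸ mk_set_le _) hi, i, fun s hs hs1 => ?_⟩
  obtain ⟨a, rfl⟩ := Finset.card_eq_one.mp hs1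
  exact hs (Finset.mem_singleton_self a)

/-- **Erdős–Rado theorem.** Let `r` be a non-negative integer and `κ` an infinite cardinal.
If the `(r+1)`-element subsets of a set of cardinality `(exp_r κ)⁺` are coloured with `κ`
colours, then there is a subset of cardinality `κ⁺` all of whose `(r+1)`-element subsets
receive the same colour. -/
theorem erdos_rado (r : ℕ) (κ : Cardinal) (hκ : ℵ₀ ≤ κ)
    (α β : Type) (hα : #α = Order.succ (iterExp κ r)) (hβ : #β = κ)
    (c : Finset α → β) :
    ∃ H : Set α, #H = Order.succ κ ∧ ∃ i : β,
      ∀ s : Finset α, ↑s ⊆ H → s.card = r + 1 → c s = i := by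
  classical
  induction r generalizing α c with
  | zero => exact exists_homogeneous_singletons hκ hα hβ.le c
  | succ n ih =>
    have hμ : ℵ₀ ≤ iterExp κ n := aleph0_le_iterExp hκ n
    obtain ⟨D, hDcard, hD⟩ := exists_isTypeClosed c hμ (hβ.trans_le (le_iterExp κ n))
    obtain ⟨a, ha⟩ : ∃ a, a ∉ D := by
      by_contra! hDα
      rw [eq_univ_of_forall hDα, mk_univ, hα] at hDcard
      exact (lt_succ _).not_ge hDcard
    obtain ⟨x, hx, hxa⟩ := hD.exists_injective_colorType_eq c ha mk_Iio_toType_ord_succ_le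
    obtain ⟨H, hH, i, hHi⟩ := ih _ (mk_ord_toType _) fun t => c (insert a (t.image x))
    exact ⟨x '' H, (mk_image_eq hx).trans hH, i, homogeneous_image_of_colorType_eq c hx hxa hHi⟩
end

section
/- For every positive integer r, if the r-element subsets of a set of cardinality ℶ_ω are coloured with finitely many colours, then there is a subset of cardinality ℵ₁ all of whose r-element subsets receive the same colour. -/
/-!
Stepping up (Erdős–Rado): let `κ ≥ ℵ₀` and `#γ > 2 ^ κ`, and call the colours of `{v} ∪ s`, for
finite `s ⊆ B`, the type of `v` over `B`. Iterating along the regular cardinal `κ⁺` gives a set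
`C` of size `2 ^ κ` containing, for every `B ⊆ C` of size `≤ κ`, a realization outside `B` of
every type over `B` realized outside `B`. Taking `u ∉ C` and choosing recursively in `C` a fresh
element with the type of `u` over the previous ones yields an injective `κ⁺`-sequence along which
the colour of a finite set only depends on its non-maximal elements: it is the colour of these
together with `u`. A homogeneous set for this colouring of the `r`-subsets of `κ⁺` gives one for
the `(r + 1)`-subsets of `γ`, and induction on `r` with `κ = ℶ_r` finishes, since `ℶ_r < ℶ_ω`.
-/

open Cardinal Set Order Function

universe u

namespace ErdosRado

theorem exists_forall_lt_of_mk_lt_cof {α : Type u} [LinearOrder α] {s : Set α}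
    (hs : #s < Order.cof α) : ∃ x, ∀ y ∈ s, y < x := by
  by_contra! h
  exact (Order.cof_le h).not_gt hs

theorem mk_iUnion_le_of_le {ι α : Type u} {f : ι → Set α} {c : Cardinal.{u}} (hc : ℵ₀ ≤ c)
    (hι : #ι ≤ c) (hf : ∀ i, #(f i) ≤ c) : #(⋃ i, f i) ≤ c :=
  (mk_iUnion_le f).trans <| (mul_le_mul' hι (ciSup_le' hf)).trans (mul_eq_self hc).le

theorem two_power_power_self {κ : Cardinal.{u}} (hκ : ℵ₀ ≤ κ) :
    ((2 : Cardinal) ^ κ) ^ κ = 2 ^ κ := by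
  rw [← power_mul, mul_eq_self hκ]

section SuccOrd

variable {κ : Cardinal.{u}}

theorem mk_Iio_succ_ord_toType_le (i : (succ κ).ord.ToType) : #(Iio i) ≤ κ :=
  lt_succ_iff.1 (by simpa using mk_Iio_lt i)

theorem exists_forall_lt_succ_ord_toType (hκ : ℵ₀ ≤ κ) {s : Set (succ κ).ord.ToType}
    (hs : #s ≤ κ) : ∃ i, ∀ j ∈ s, j < i := by
  refine exists_forall_lt_of_mk_lt_cof (hs.trans_lt ?_)
  rw [Ordinal.cof_toType, (isRegular_succ hκ).cof_ord]
  exact lt_succ κ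

end SuccOrd

section Closure

variable {γ : Type u} (κ : Cardinal.{u}) (grow : Set γ → Set γ)

def closureStage : (succ κ).ord.ToType → Set γ :=
  wellFounded_lt.fix fun i stage =>
    (⋃ j : Iio i, stage j j.2) ∪
      ⋃ B : {B : Set γ // B ⊆ ⋃ j : Iio i, stage j j.2 ∧ #B ≤ κ}, grow B.1

theorem closureStage_eq (i : (succ κ).ord.ToType) :
    closureStage κ grow i = (⋃ j : Iio i, closureStage κ grow j) ∪
      ⋃ B : {B : Set γ // B ⊆ ⋃ j : Iio i, closureStage κ grow j ∧ #B ≤ κ}, grow B.1 := by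
  rw [closureStage, WellFounded.fix_eq]

variable {κ grow}

theorem mk_closureStage_le (hκ : ℵ₀ ≤ κ) (hgrow : ∀ B : Set γ, #B ≤ κ → #(grow B) ≤ 2 ^ κ)
    (i : (succ κ).ord.ToType) : #(closureStage κ grow i) ≤ 2 ^ κ := by
  have h2κ : ℵ₀ ≤ 2 ^ κ := hκ.trans (cantor κ).le
  induction i using WellFoundedLT.induction with
  | ind i ih =>
    have hS : #(⋃ j : Iio i, closureStage κ grow j) ≤ 2 ^ κ :=
      mk_iUnion_le_of_le h2κ ((mk_Iio_succ_ord_toType_le i).trans (cantor κ).le)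
        fun j => ih j j.2
    have hsmall := (mk_bounded_subset_le _ κ).trans <|
      (power_le_power_right (max_le hS h2κ)).trans (two_power_power_self hκ).le
    rw [closureStage_eq]
    exact (mk_union_le _ _).trans <| (add_le_add hS
      (mk_iUnion_le_of_le h2κ hsmall fun B => hgrow B B.2.2)).trans (add_eq_self h2κ).le

theorem grow_subset_iUnion_closureStage (hκ : ℵ₀ ≤ κ) {B : Set γ}
    (hBC : B ⊆ ⋃ i, closureStage κ grow i) (hB : #B ≤ κ) :
    grow B ⊆ ⋃ i, closureStage κ grow i := by
  choose idx hidx using fun b : B => mem_iUnion.1 (hBC b.2)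
  obtain ⟨i, hi⟩ :=
    exists_forall_lt_succ_ord_toType hκ (mk_range_le.trans hB : #(range idx) ≤ κ)
  have hBi : B ⊆ ⋃ j : Iio i, closureStage κ grow j := fun b hb =>
    mem_iUnion.2 ⟨⟨idx ⟨b, hb⟩, hi _ (mem_range_self _)⟩, hidx ⟨b, hb⟩⟩
  refine fun x hx => mem_iUnion.2 ⟨i, ?_⟩
  rw [closureStage_eq]
  exact mem_union_right _ (mem_iUnion.2 ⟨⟨B, hBi, hB⟩, hx⟩)

theorem exists_closed_under (hκ : ℵ₀ ≤ κ) (hgrow : ∀ B : Set γ, #B ≤ κ → #(grow B) ≤ 2 ^ κ) :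
    ∃ C : Set γ, #C ≤ 2 ^ κ ∧ ∀ B ⊆ C, #B ≤ κ → grow B ⊆ C := by
  refine ⟨⋃ i, closureStage κ grow i, mk_iUnion_le_of_le (hκ.trans (cantor κ).le) ?_
    (mk_closureStage_le hκ hgrow), fun B hBC hB => grow_subset_iUnion_closureStage hκ hBC hB⟩
  rw [mk_ord_toType]
  exact succ_le_of_lt (cantor κ)

end Closure

theorem mk_finset_subset_le {γ : Type u} {κ : Cardinal.{u}} (hκ : ℵ₀ ≤ κ) {B : Set γ}
    (hB : #B ≤ κ) : #{s : Finset γ // ↑s ⊆ B} ≤ κ := by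
  classical
  have hsurj : Surjective fun t : Finset B =>
      (⟨t.map (Embedding.subtype _), by simp⟩ : {s : Finset γ // ↑s ⊆ B}) :=
    fun s => ⟨s.1.subtype (· ∈ B), Subtype.ext (Finset.subtype_map_of_mem fun _ hx => s.2 hx)⟩
  refine (mk_le_of_surjective hsurj).trans ?_
  rcases finite_or_infinite B with hfin | hinf
  · exact mk_le_aleph0.trans hκ
  · rwa [mk_finset_of_infinite]

section Types

variable {γ β : Type u} [DecidableEq γ] (f : Finset γ → β)

def typeOver (B : Set γ) (v : γ) : {s : Finset γ // ↑s ⊆ B} → β :=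
  fun s => f (insert v s.1)

def realizers (B : Set γ) : Set γ :=
  range fun τ : typeOver f B '' Bᶜ => τ.2.choose

theorem exists_mem_realizers {B : Set γ} {v : γ} (hv : v ∉ B) :
    ∃ w ∈ realizers f B, w ∉ B ∧ typeOver f B w = typeOver f B v := by
  let τ : typeOver f B '' Bᶜ := ⟨_, v, hv, rfl⟩
  exact ⟨_, mem_range_self τ, τ.2.choose_spec⟩

theorem mk_realizers_le {κ : Cardinal.{u}} (hκ : ℵ₀ ≤ κ) (hβ : #β ≤ 2 ^ κ) {B : Set γ}
    (hB : #B ≤ κ) : #(realizers f B) ≤ 2 ^ κ :=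
  calc #(realizers f B)
      ≤ #({s : Finset γ // ↑s ⊆ B} → β) := mk_range_le.trans (mk_set_le _)
    _ = #β ^ #{s : Finset γ // ↑s ⊆ B} := (power_def _ _).symm
    _ ≤ (2 ^ κ) ^ κ := (power_le_power_right hβ).trans
        (power_le_power_left (power_ne_zero _ two_ne_zero) (mk_finset_subset_le hκ hB))
    _ = 2 ^ κ := two_power_power_self hκ

end Types

theorem exists_seq_forall_image_Iio {γ ι : Type u} [LinearOrder ι] [WellFoundedLT ι]
    {κ : Cardinal.{u}} (hι : ∀ i : ι, #(Iio i) ≤ κ) {C : Set γ} {Q : Set γ → γ → Prop}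
    (hQ : ∀ P ⊆ C, #P ≤ κ → ∃ w ∈ C, Q P w) : ∃ a : ι → γ, ∀ i, Q (a '' Iio i) (a i) := by
  choose next hnextC hnextQ using hQ
  let step (i : ι) (prev : ∀ j < i, C) : C :=
    ⟨next _ (range_subset_iff.2 fun j : Iio i => (prev j j.2).2) (mk_range_le.trans (hι i)),
      hnextC _ _ _⟩
  refine ⟨fun i => wellFounded_lt.fix step i, fun i => ?_⟩
  rw [image_eq_range]
  beta_reduce
  rw [WellFounded.fix_eq]
  exact hnextQ _ _ _

theorem exists_endHomogeneous {γ β ι : Type u} [DecidableEq γ] [LinearOrder ι]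
    [WellFoundedLT ι] {κ : Cardinal.{u}} (hκ : ℵ₀ ≤ κ) (hι : ∀ i : ι, #(Iio i) ≤ κ)
    (hβ : #β ≤ 2 ^ κ) (hγ : 2 ^ κ < #γ) (f : Finset γ → β) :
    ∃ (a : ι → γ) (u : γ), Injective a ∧ ∀ (s : Finset ι) (i : ι), (∀ j ∈ s, j < i) →
      f (insert (a i) (s.image a)) = f (insert u (s.image a)) := by
  obtain ⟨C, hCcard, hC⟩ :=
    exists_closed_under hκ fun B hB => mk_realizers_le f hκ hβ hB
  obtain ⟨u, hu⟩ : ∃ u, u ∉ C := by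
    by_contra! h
    rw [eq_univ_of_forall h, mk_univ] at hCcard
    exact hCcard.not_gt hγ
  obtain ⟨a, ha⟩ := exists_seq_forall_image_Iio hι
    (Q := fun P w => w ∉ P ∧ typeOver f P w = typeOver f P u) fun P hPC hP => by
      obtain ⟨w, hw, hwP, hwu⟩ := exists_mem_realizers f fun huP => hu (hPC huP)
      exact ⟨w, hC P hPC hP hw, hwP, hwu⟩
  refine ⟨a, u, Injective.of_lt_imp_ne fun j i hji hij => (ha i).1 ⟨j, hji, hij⟩,
    fun s i hs => ?_⟩
  have hsub : ↑(s.image a) ⊆ a '' Iio i := by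
    rw [Finset.coe_image]
    exact image_mono fun j hj => hs j hj
  exact congrFun (ha i).2 ⟨s.image a, hsub⟩

-- `ℶ_ r` rather than the sharp `ℶ_ (r - 1)`, so that `r = 0` is a trivial base case.
theorem erdos_rado {β : Type u} [Countable β] (r : ℕ) {γ : Type u} (hγ : ℶ_ r < #γ)
    (f : Finset γ → β) :
    ∃ H : Set γ, #H = ℵ₁ ∧ ∃ b, ∀ s : Finset γ, ↑s ⊆ H → s.card = r → f s = b := by
  classical
  induction r generalizing γ with
  | zero =>
    obtain ⟨H, hH⟩ := le_mk_iff_exists_set.1 (aleph_one_le_iff.2 (by simpa using hγ))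
    exact ⟨H, hH, f ∅, fun s _ hs => by rw [Finset.card_eq_zero.1 hs]⟩
  | succ r ih =>
    set κ := ℶ_ r
    have hκ : ℵ₀ ≤ κ := aleph0_le_beth _
    have hγ' : 2 ^ κ < #γ := by
      rwa [← beth_succ, Order.succ_eq_add_one, ← Nat.cast_one, ← Nat.cast_add]
    obtain ⟨a, u, ha, hend⟩ := exists_endHomogeneous hκ mk_Iio_succ_ord_toType_le
      (mk_le_aleph0.trans (hκ.trans (cantor κ).le)) hγ' f
    obtain ⟨H, hH, b, hb⟩ := ih (γ := (succ κ).ord.ToType)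
      (by rw [mk_ord_toType]; exact lt_succ κ) fun s => f (insert u (s.image a))
    refine ⟨a '' H, by rw [mk_image_eq ha, hH], b, fun t ht hcard => ?_⟩
    obtain ⟨s, hsH, rfl⟩ := Finset.subset_set_image_iff.1 ht
    rw [Finset.card_image_of_injective _ ha] at hcard
    have hne : s.Nonempty := Finset.card_pos.1 (by omega)
    have hsplit : s.image a = insert (a (s.max' hne)) ((s.erase (s.max' hne)).image a) := by
      rw [← Finset.image_insert, Finset.insert_erase (s.max'_mem hne)]
    rw [hsplit, hend _ _ fun j hj => s.lt_max'_of_mem_erase_max' hne hj]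
    refine hb _ ((Finset.coe_subset.2 (s.erase_subset _)).trans hsH) ?_
    rw [Finset.card_erase_of_mem (s.max'_mem hne), hcard, Nat.add_sub_cancel]

end ErdosRado

theorem erdos_rado_beth_omega_general (r : ℕ)
    (α β : Type) (hα : #α = Cardinal.beth Ordinal.omega0) (hβ : Finite β)
    (c : Finset α → β) :
    ∃ H : Set α, #H = aleph 1 ∧ ∃ i : β,
      ∀ s : Finset α, ↑s ⊆ H → s.card = r → c s = i := by
  exact ErdosRado.erdos_rado r (hα ▸ beth_lt_beth.2 (Ordinal.natCast_lt_omega0 r)) c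

/-- For every positive integer `r`, if the `r`-element subsets of a set of cardinality `ℶ_ω`
are coloured with finitely many colours, then there is a subset of cardinality `ℵ₁` all of
whose `r`-element subsets receive the same colour. -/
theorem erdos_rado_beth_omega (r : ℕ) (hr : 0 < r)
    (α β : Type) (hα : #α = Cardinal.beth Ordinal.omega0) (hβ : Finite β)
    (c : Finset α → β) :
    ∃ H : Set α, #H = aleph 1 ∧ ∃ i : β,
      ∀ s : Finset α, ↑s ⊆ H → s.card = r → c s = i :=
  erdos_rado_beth_omega_general r α β hα hβ c
end

section
/- Let k be a positive integer, let 0 ≤ a < b ≤ k be integers, and let π_a and π_b be the patterns consisting of a twos followed by 2(k−a) ones, and b twos followed by 2(k−b) ones, respectively. Let (f_γ)_{γ < ω·(b−a+2)} be a strictly increasing (with respect to the well-ordered basis) family of distinct basis vectors of ℚ^{ℶ_ω}, indexed by the ordinals below ω·(b−a+2), and for each i < ω define x_i = Σ_{r=0}^{a−1} f_r + Σ_{r=1}^{b−a} f_{ω·r+i} + Σ_{r=0}^{2(k−b)−1} (1/2) f_{ω·(b−a+1)+r}. Then for all i, j ∈ ℕ, the pattern of x_i + x_j equals π_b if i = j,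 and equals π_a if i ≠ j. -/
/-!
The pattern of `x` only depends on the order type of its support, so the basis vectors indexed
by ordinals `ω·r + c < ω·(b−a+2)` may be replaced by the pairs `(r, c)` of `ℕ ×ₗ ℕ`. There
`x_i + x_j` splits into three blocks on the consecutive bands `r = 0`, `1 ≤ r ≤ b−a` and
`r = b−a+1`, whose patterns concatenate. The outer blocks give `a` twos and `2(k−b)` ones
(the halves are doubled); in band `r` of the middle block, `x_i + x_i` has the single entry `2`
at `(r, i)`, whereas for `i ≠ j` the entries `1, 1` at `(r, i)` and `(r, j)` stay separate.
-/

open Cardinal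

/-- The pattern of a finitely supported function `x : ι →₀ ℚ` over a linearly ordered index
type: the list of the nonzero values of `x`, taken in increasing order of their indices. -/
def pattern {ι : Type*} [LinearOrder ι] (x : ι →₀ ℚ) : List ℚ :=
  (x.support.sort (· ≤ ·)).map x

open Finsupp

universe u

section Support

variable {ι κ M : Type*} [AddCommMonoid M] {P : ι → Prop}

theorem Finsupp.forall_mem_support_single {i : ι} {c : M} (h : P i) :
    ∀ u ∈ (single i c).support, P u :=
  fun _ hu => Finset.mem_singleton.1 (support_single_subset hu) ▸ h

theorem Finsupp.forall_mem_support_add {x y : ι →₀ M} (hx : ∀ u ∈ x.support, P u)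
    (hy : ∀ u ∈ y.support, P u) : ∀ u ∈ (x + y).support, P u := by
  classical
  intro u hu
  rcases Finset.mem_union.1 (support_add hu) with hu | hu
  exacts [hx u hu, hy u hu]

theorem Finsupp.forall_mem_support_finsetSum {s : Finset κ} {y : κ → ι →₀ M}
    (h : ∀ r ∈ s, ∀ u ∈ (y r).support, P u) : ∀ u ∈ (∑ r ∈ s, y r).support, P u := by
  intro u hu
  obtain ⟨r, hr, hu⟩ := mem_support_finsetSum u hu
  exact h r hr u hu

end Support

section Pattern

variable {ι κ : Type*} [LinearOrder ι] [LinearOrder κ]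

theorem pattern_eq_map_of_sortedLT {x : ι →₀ ℚ} {l : List ι} (hl : l.SortedLT)
    (hx : l.toFinset = x.support) : pattern x = l.map x := by
  rw [pattern, ← hx, (List.toFinset_sort _ hl.nodup).2 hl.sortedLE.pairwise]

theorem pattern_single {i : ι} {c : ℚ} (hc : c ≠ 0) : pattern (single i c) = [c] := by
  rw [pattern_eq_map_of_sortedLT (List.pairwise_singleton _ i).sortedLT
    (by simp [support_single i hc])]
  simp

theorem pattern_add {x y : ι →₀ ℚ} (h : ∀ s ∈ x.support, ∀ t ∈ y.support, s < t) :
    pattern (x + y) = pattern x ++ pattern y := by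
  classical
  have hdisj : Disjoint x.support y.support :=
    Finset.disjoint_left.2 fun s hx hy => lt_irrefl s (h s hx s hy)
  rw [pattern_eq_map_of_sortedLT (l := x.support.sort ++ y.support.sort)
    (List.pairwise_append.2 ⟨(Finset.sortedLT_sort _).pairwise,
      (Finset.sortedLT_sort _).pairwise,
      fun s hs t ht => h s ((Finset.mem_sort _).1 hs) t ((Finset.mem_sort _).1 ht)⟩).sortedLT
    (by simp [support_add_eq hdisj]), List.map_append, pattern, pattern]
  congr 1 <;> refine List.map_congr_left fun s hs => ?_
  · have : s ∉ y.support := Finset.disjoint_left.1 hdisj ((Finset.mem_sort _).1 hs)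
    simp [notMem_support_iff.1 this]
  · have : s ∉ x.support := Finset.disjoint_right.1 hdisj ((Finset.mem_sort _).1 hs)
    simp [notMem_support_iff.1 this]

theorem pattern_mapDomain {g : ι → κ} {x : ι →₀ ℚ} (hg : StrictMonoOn g x.support) :
    pattern (mapDomain g x) = pattern x := by
  classical
  have hsorted : (x.support.sort.map g).SortedLT :=
    (List.pairwise_map.2 (((Finset.sortedLT_sort _).pairwise).imp_of_mem
      fun hs ht hst => hg (by simpa using hs) (by simpa using ht) hst)).sortedLT
  rw [pattern_eq_map_of_sortedLT hsorted
    (by ext; simp [mapDomain_support_of_injOn x hg.injOn]), List.map_map, pattern]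
  exact List.map_congr_left fun s hs =>
    mapDomain_apply' _ x subset_rfl hg.injOn (by simpa using hs)

theorem pattern_finsetSum (s : Finset κ) (y : κ → ι →₀ ℚ)
    (h : ∀ r ∈ s, ∀ r' ∈ s, r < r' → ∀ u ∈ (y r).support, ∀ v ∈ (y r').support, u < v) :
    pattern (∑ r ∈ s, y r) = s.sort.flatMap fun r => pattern (y r) := by
  classical
  induction s using Finset.induction_on_min with
  | empty => simp [pattern]
  | insert r s hr ih =>
    have hrs : r ∉ s := fun h => lt_irrefl r (hr r h)
    rw [Finset.sum_insert hrs, Finset.sort_insert _ (fun t ht => (hr t ht).le) hrs,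
      List.flatMap_cons, pattern_add,
      ih fun t ht t' ht' => h t (by simp [ht]) t' (by simp [ht'])]
    intro u hu v hv
    obtain ⟨t, ht, hvt⟩ := mem_support_finsetSum v hv
    exact h r (by simp) t (by simp [ht]) (hr t ht) u hu v hvt

theorem pattern_sum_single {s : Finset κ} {g : κ → ι} (hg : StrictMonoOn g s) {c : ℚ}
    (hc : c ≠ 0) : pattern (∑ r ∈ s, single (g r) c) = List.replicate s.card c := by
  rw [pattern_finsetSum s _ fun r hr r' hr' hrr' => forall_mem_support_single
    (forall_mem_support_single (P := (g r < ·)) (hg hr hr' hrr'))]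
  simp [pattern_single hc, List.flatMap_def]

end Pattern

theorem Ordinal.mul_add_lt_mul_add {a r s c : Ordinal} (h : r < s) (hc : c < a) (d : Ordinal) :
    a * r + c < a * s + d :=
  calc a * r + c < a * r + a := add_lt_add_right hc _
    _ = a * Order.succ r := (Ordinal.mul_succ a r).symm
    _ ≤ a * s := mul_le_mul_right (Order.succ_le_of_lt h) _
    _ ≤ a * s + d := le_self_add

def omegaLex (p : ℕ ×ₗ ℕ) : Ordinal.{u} := Ordinal.omega0 * (ofLex p).1 + (ofLex p).2

theorem omegaLex_lt {p : ℕ ×ₗ ℕ} {s : ℕ} (h : (ofLex p).1 < s) :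
    omegaLex.{u} p < Ordinal.omega0 * s := by
  simpa [omegaLex] using
    Ordinal.mul_add_lt_mul_add (Nat.cast_lt.2 h) (Ordinal.natCast_lt_omega0 _) 0

theorem strictMono_omegaLex : StrictMono omegaLex.{u} := by
  rintro ⟨r, c⟩ ⟨s, d⟩ h
  rcases Prod.Lex.lt_iff.1 h with h | ⟨rfl, h⟩
  · exact Ordinal.mul_add_lt_mul_add (Nat.cast_lt.2 h) (Ordinal.natCast_lt_omega0 _) _
  · exact add_lt_add_right (Nat.cast_lt.2 h) _

theorem pattern_sum_single_add_single (s : Finset ℕ) {i j : ℕ} (hij : i ≠ j) {c : ℚ}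
    (hc : c ≠ 0) :
    pattern (∑ r ∈ s, (single (toLex (r, i)) c + single (toLex (r, j)) c)) =
      List.replicate (2 * s.card) c := by
  wlog hlt : i < j generalizing i j
  · simp_rw [add_comm (single (toLex (_, i)) c)]
    exact this hij.symm (by omega)
  have hpair : ∀ r : ℕ,
      pattern (single (toLex (r, i)) c + single (toLex (r, j)) c) = List.replicate 2 c := by
    intro r
    rw [pattern_add, pattern_single hc, pattern_single hc]
    · rfl
    exact forall_mem_support_single (forall_mem_support_single (P := (toLex (r, i) < ·))
      (Prod.Lex.toLex_lt_toLex.2 (.inr ⟨rfl, hlt⟩)))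
  have hband : ∀ r : ℕ, ∀ u ∈ (single (toLex (r, i)) c + single (toLex (r, j)) c).support,
      (ofLex u).1 = r := fun r =>
    forall_mem_support_add (forall_mem_support_single rfl) (forall_mem_support_single rfl)
  rw [pattern_finsetSum]
  · simp only [hpair, List.flatMap_def, List.map_const', Finset.length_sort,
      List.flatten_replicate_replicate, mul_comm]
  intro r _ r' _ hrr' u hu v hv
  exact Prod.Lex.lt_iff.2 (.inl (by rw [hband r u hu, hband r' v hv]; exact hrr'))

/-- `x_i` for `m = b − a` and `n = 2(k − b)`, with the basis vector of index `ω·r + c` replaced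
by the one of index `(r, c)`. -/
noncomputable def lexVector (a m n i : ℕ) : ℕ ×ₗ ℕ →₀ ℚ :=
  ∑ r ∈ Finset.range a, single (toLex (0, r)) 1 + ∑ r ∈ Finset.Icc 1 m, single (toLex (r, i)) 1
    + ∑ r ∈ Finset.range n, single (toLex (m + 1, r)) (1 / 2)

theorem fst_le_of_mem_support_lexVector {a m n i : ℕ} :
    ∀ u ∈ (lexVector a m n i).support, (ofLex u).1 ≤ m + 1 :=
  forall_mem_support_add (forall_mem_support_add
    (forall_mem_support_finsetSum fun _ _ => forall_mem_support_single (Nat.zero_le _))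
    (forall_mem_support_finsetSum fun _ hr =>
      forall_mem_support_single (Nat.le_succ_of_le (Finset.mem_Icc.1 hr).2)))
    (forall_mem_support_finsetSum fun _ _ => forall_mem_support_single le_rfl)

theorem lexVector_add_lexVector (a m n i j : ℕ) :
    lexVector a m n i + lexVector a m n j =
      ∑ r ∈ Finset.range a, single (toLex (0, r)) 2
        + ∑ r ∈ Finset.Icc 1 m, (single (toLex (r, i)) 1 + single (toLex (r, j)) 1)
        + ∑ r ∈ Finset.range n, single (toLex (m + 1, r)) 1 := by
  calc lexVector a m n i + lexVector a m n j
      = (∑ r ∈ Finset.range a, single (toLex (0, r)) (1 : ℚ)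
          + ∑ r ∈ Finset.range a, single (toLex (0, r)) 1)
        + (∑ r ∈ Finset.Icc 1 m, single (toLex (r, i)) 1
          + ∑ r ∈ Finset.Icc 1 m, single (toLex (r, j)) 1)
        + (∑ r ∈ Finset.range n, single (toLex (m + 1, r)) (1 / 2)
          + ∑ r ∈ Finset.range n, single (toLex (m + 1, r)) (1 / 2)) := by
        simp only [lexVector]; abel
    _ = _ := by simp only [← Finset.sum_add_distrib, ← single_add]; norm_num

theorem pattern_lexVector_add (a m n i j : ℕ) :
    pattern (lexVector a m n i + lexVector a m n j) =
      List.replicate a 2 ++ (if i = j then List.replicate m 2 else List.replicate (2 * m) 1)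
        ++ List.replicate n 1 := by
  rw [lexVector_add_lexVector]
  set A := ∑ r ∈ Finset.range a, single (toLex (0, r)) (2 : ℚ)
  set B := ∑ r ∈ Finset.Icc 1 m, (single (toLex (r, i)) (1 : ℚ) + single (toLex (r, j)) 1)
  set C := ∑ r ∈ Finset.range n, single (toLex (m + 1, r)) (1 : ℚ)
  have hA : ∀ u ∈ A.support, (ofLex u).1 = 0 :=
    forall_mem_support_finsetSum fun _ _ => forall_mem_support_single rfl
  have hB : ∀ u ∈ B.support, (ofLex u).1 ∈ Finset.Icc 1 m :=
    forall_mem_support_finsetSum fun _ hr =>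
      forall_mem_support_add (forall_mem_support_single hr) (forall_mem_support_single hr)
  have hC : ∀ u ∈ C.support, (ofLex u).1 = m + 1 :=
    forall_mem_support_finsetSum fun _ _ => forall_mem_support_single rfl
  have hA_B : ∀ u ∈ A.support, ∀ v ∈ B.support, u < v := fun u hu v hv =>
    Prod.Lex.lt_iff.2 (.inl (by have := Finset.mem_Icc.1 (hB v hv); rw [hA u hu]; omega))
  have hAB_C : ∀ u ∈ (A + B).support, ∀ v ∈ C.support, u < v := by
    refine forall_mem_support_add (fun u hu v hv => Prod.Lex.lt_iff.2 (.inl ?_))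
      (fun u hu v hv => Prod.Lex.lt_iff.2 (.inl ?_))
    · rw [hA u hu, hC v hv]; omega
    · have := Finset.mem_Icc.1 (hB u hu); rw [hC v hv]; omega
  have hpatternB : pattern B = if i = j then List.replicate m 2 else List.replicate (2 * m) 1 := by
    split_ifs with hij
    · subst hij
      simp_rw [B, ← single_add, one_add_one_eq_two]
      rw [pattern_sum_single (fun _ _ _ _ h => Prod.Lex.toLex_lt_toLex.2 (.inl h)) two_ne_zero,
        Nat.card_Icc, Nat.add_sub_cancel]
    · rw [pattern_sum_single_add_single _ hij one_ne_zero, Nat.card_Icc, Nat.add_sub_cancel]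
  rw [pattern_add hAB_C, pattern_add hA_B, hpatternB,
    pattern_sum_single (fun _ _ _ _ h => by simpa [Prod.Lex.toLex_lt_toLex] using h) two_ne_zero,
    pattern_sum_single (fun _ _ _ _ h => by simpa [Prod.Lex.toLex_lt_toLex] using h) one_ne_zero,
    Finset.card_range, Finset.card_range]

theorem pattern_add_eq_ite_general (k a b : ℕ) (hab : a < b) (hbk : b ≤ k)
    (f : Ordinal → (Cardinal.beth Ordinal.omega0).ord.ToType)
    (hf : StrictMonoOn f (Set.Iio (Ordinal.omega0 * ((b - a + 2 : ℕ) : Ordinal))))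
    (x : ℕ → ((Cardinal.beth Ordinal.omega0).ord.ToType →₀ ℚ))
    (hx : ∀ i : ℕ, x i =
      (∑ r ∈ Finset.range a, Finsupp.single (f (r : Ordinal)) (1 : ℚ))
      + (∑ r ∈ Finset.Icc 1 (b - a),
          Finsupp.single (f (Ordinal.omega0 * (r : Ordinal) + (i : Ordinal))) (1 : ℚ))
      + (∑ r ∈ Finset.range (2 * (k - b)),
          Finsupp.single
            (f (Ordinal.omega0 * ((b - a + 1 : ℕ) : Ordinal) + (r : Ordinal))) ((1 : ℚ)/2))) :
    ∀ i j : ℕ,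
      pattern (x i + x j) =
        if i = j then
          List.replicate b (2 : ℚ) ++ List.replicate (2 * (k - b)) (1 : ℚ)
        else
          List.replicate a (2 : ℚ) ++ List.replicate (2 * (k - a)) (1 : ℚ) := by
  have hmap : ∀ i, x i = mapDomain (f ∘ omegaLex) (lexVector a (b - a) (2 * (k - b)) i) := by
    intro i
    simp [hx i, lexVector, mapDomain_add, mapDomain_finsetSum, omegaLex]
  intro i j
  have hmono : StrictMonoOn (f ∘ omegaLex)
      (lexVector a (b - a) (2 * (k - b)) i + lexVector a (b - a) (2 * (k - b)) j).support :=
    hf.comp (strictMono_omegaLex.strictMonoOn _) fun u hu => omegaLex_lt (Nat.lt_succ_of_le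
      (forall_mem_support_add fst_le_of_mem_support_lexVector fst_le_of_mem_support_lexVector u hu))
  rw [hmap, hmap, ← mapDomain_add, pattern_mapDomain hmono, pattern_lexVector_add]
  split_ifs
  · rw [← List.replicate_add, Nat.add_sub_cancel' hab.le]
  · rw [List.append_assoc, ← List.replicate_add]
    congr 2
    omega

/-- Let `k` be a positive integer, `0 ≤ a < b ≤ k`. Let `f` enumerate, strictly increasingly,
indices of basis vectors of the rational vector space of dimension `ℶ_ω` (realised as
finitely supported functions on the well-ordered index type `(beth ω).ord.toType`, whose
basis vectors are `Finsupp.single _ 1`) over the ordinals below `ω·(b−a+2)`, and for `i < ω` set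
`x_i = Σ_{r<a} f_r + Σ_{r=1}^{b−a} f_{ω·r+i} + Σ_{r<2(k−b)} (1/2) f_{ω·(b−a+1)+r}`.
Then the pattern of `x_i + x_j` is `b` twos followed by `2(k−b)` ones if `i = j`,
and `a` twos followed by `2(k−a)` ones if `i ≠ j`. -/
theorem pattern_add_eq_ite (k a b : ℕ) (hk : 0 < k) (hab : a < b) (hbk : b ≤ k)
    (f : Ordinal → (Cardinal.beth Ordinal.omega0).ord.ToType)
    (hf : StrictMonoOn f (Set.Iio (Ordinal.omega0 * ((b - a + 2 : ℕ) : Ordinal))))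
    (x : ℕ → ((Cardinal.beth Ordinal.omega0).ord.ToType →₀ ℚ))
    (hx : ∀ i : ℕ, x i =
      (∑ r ∈ Finset.range a, Finsupp.single (f (r : Ordinal)) (1 : ℚ))
      + (∑ r ∈ Finset.Icc 1 (b - a),
          Finsupp.single (f (Ordinal.omega0 * (r : Ordinal) + (i : Ordinal))) (1 : ℚ))
      + (∑ r ∈ Finset.range (2 * (k - b)),
          Finsupp.single
            (f (Ordinal.omega0 * ((b - a + 1 : ℕ) : Ordinal) + (r : Ordinal))) ((1 : ℚ)/2))) :
    ∀ i j : ℕ,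
      pattern (x i + x j) =
        if i = j then
          List.replicate b (2 : ℚ) ++ List.replicate (2 * (k - b)) (1 : ℚ)
        else
          List.replicate a (2 : ℚ) ++ List.replicate (2 * (k - a)) (1 : ℚ) :=
  pattern_add_eq_ite_general k a b hab hbk f hf x hx
end
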